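/- For every nonnegative integer n and complex numbers q, x with 0 < |q| < 1 (or q not a root of unity) such that no denominator vanishes, the sum over k from 0 to n of (q^{-3n}; q^3)_k * (x;q)_k (q/x;q)_k / ((q;q)_k (-q;q)_k (q^{1/2};q)_k (-q^{1/2};q)_k (q^{-3n};q)_k) * q^k equals ((qx; q^3)_n (q^2/x; q^3)_n) / ((q; q^3)_n (q^2; q^3)_n). (q-analogue of Gosper's first identity, due to Chu.) -/

import Mathlib

/-!
Write `F n k` for the `k`-th summand and `M = q^{-3(n+1)}`. The four Pochhammer symbols with
bases `±q, ±q^{1/2}` in the denominator multiply to `(q; q)_{2k}`, which removes `q^{1/2}`.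
The summands admit a WZ pair: `F (n+1) k = ρ_n F n k + G (k+1) - G k` with
`G k = c(q^k) F (n+1) k` and `c(K) = M (1 - K²)(K² - q) / (K (1 - M K)(1 - q M K))`.
Since `G 0 = 0` and `c(q^{n+1}) = -1` (so `G (n+1) = -F (n+1) (n+1)`), summing over `k`
gives `S (n+1) = ρ_n S n`; and `ρ_n` is exactly the ratio of consecutive right-hand sides.
-/

/-- q-Pochhammer symbol `(a; q)_k`. -/
noncomputable def qpoch (a q : ℂ) (k : ℕ) : ℂ := ∏ j ∈ Finset.range k, (1 - a * q ^ j)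

open Finset

section QPochhammer

variable (a q : ℂ) (k : ℕ)

@[simp] lemma qpoch_zero : qpoch a q 0 = 1 := prod_range_zero _

lemma qpoch_succ : qpoch a q (k + 1) = qpoch a q k * (1 - a * q ^ k) := prod_range_succ _ _

lemma qpoch_succ' : qpoch a q (k + 1) = (1 - a) * qpoch (a * q) q k := by
  simp only [qpoch, prod_range_succ', pow_succ, pow_zero, mul_one, mul_assoc, mul_comm]

lemma qpoch_mul_qpoch_neg : qpoch a q k * qpoch (-a) q k = qpoch (a ^ 2) (q ^ 2) k := by
  simp only [qpoch, ← prod_mul_distrib]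
  exact prod_congr rfl fun j _ => by ring

lemma qpoch_two_mul : qpoch a q (2 * k) = qpoch a (q ^ 2) k * qpoch (a * q) (q ^ 2) k := by
  induction k with
  | zero => simp
  | succ k ih =>
    rw [show 2 * (k + 1) = 2 * k + 1 + 1 by ring, qpoch_succ, qpoch_succ, ih, qpoch_succ,
      qpoch_succ]
    ring

variable {a q k}

lemma qpoch_mul_eq_div (ha : 1 - a ≠ 0) :
    qpoch (a * q) q k = qpoch a q k * (1 - a * q ^ k) / (1 - a) := by
  rw [eq_div_iff ha, ← qpoch_succ, qpoch_succ']
  ring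

end QPochhammer

section NotRootOfUnity

variable {q : ℂ} (hq : ¬IsOfFinOrder q)
include hq

lemma one_sub_pow_ne_zero {m : ℕ} (hm : m ≠ 0) : 1 - q ^ m ≠ 0 :=
  sub_ne_zero.2 fun h => hq (isOfFinOrder_iff_pow_eq_one.2 ⟨m, Nat.pos_of_ne_zero hm, h.symm⟩)

lemma one_sub_inv_pow_mul_pow_ne_zero (hq0 : q ≠ 0) {j m : ℕ} (hjm : j < m) :
    1 - (q ^ m)⁻¹ * q ^ j ≠ 0 := by
  obtain ⟨d, rfl⟩ := Nat.exists_eq_add_of_lt hjm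
  rw [sub_ne_zero, ne_comm, Ne, inv_mul_eq_one₀ (pow_ne_zero _ hq0), add_assoc, pow_add,
    mul_eq_left₀ (pow_ne_zero j hq0)]
  exact fun h => one_sub_pow_ne_zero hq (Nat.succ_ne_zero d) (by rw [h, sub_self])

end NotRootOfUnity

/-- The summand of the identity is `gosperTerm q x (q ^ (3 * n))⁻¹ k`, with the four
denominator symbols of bases `±q, ±q^{1/2}` already collapsed to `(q; q)_{2k}`. -/
noncomputable def gosperTerm (q x M : ℂ) (k : ℕ) : ℂ :=
  qpoch M (q ^ 3) k * (qpoch x q k * qpoch (q / x) q k) / (qpoch q q (2 * k) * qpoch M q k) *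
    q ^ k

/-- The WZ certificate: `gosperCert q M (q ^ k) * gosperTerm q x M k` is the telescoping part. -/
noncomputable def gosperCert (q M K : ℂ) : ℂ :=
  M * (1 - K ^ 2) * (K ^ 2 - q) / (K * (1 - M * K) * (1 - M * q * K))

/-- For `M = q^{-3(n+1)}`, the ratio of the right-hand sides at `n + 1` and at `n`
(see `gosperRatio_inv`). -/
noncomputable def gosperRatio (q x M : ℂ) : ℂ :=
  (q ^ 2 * M - x) * (q * M * x - 1) / ((q ^ 2 * M - 1) * (q * M - 1) * x)

section GosperTerm

variable (q x M : ℂ) (k : ℕ)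

lemma gosperTerm_succ : gosperTerm q x M (k + 1) = gosperTerm q x M k *
    ((1 - M * (q ^ k) ^ 3) * ((1 - x * q ^ k) * (1 - q / x * q ^ k)) /
      ((1 - q * (q ^ k) ^ 2) * (1 - q ^ 2 * (q ^ k) ^ 2) * (1 - M * q ^ k)) * q) := by
  rw [gosperTerm, gosperTerm, show 2 * (k + 1) = 2 * k + 1 + 1 by ring]
  simp only [qpoch_succ, div_eq_mul_inv, mul_inv]
  ring

variable {q M}

lemma gosperTerm_mul_q_cube (h0 : 1 - M ≠ 0) (h1 : 1 - M * q ≠ 0) (h2 : 1 - M * q ^ 2 ≠ 0) :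
    gosperTerm q x (M * q ^ 3) k = gosperTerm q x M k *
      ((1 - M * (q ^ k) ^ 3) * (1 - M * q) * (1 - M * q ^ 2) /
        ((1 - M * q ^ k) * (1 - M * q * q ^ k) * (1 - M * q ^ 2 * q ^ k))) := by
  rw [gosperTerm, gosperTerm, qpoch_mul_eq_div h0, show M * q ^ 3 = M * q ^ 2 * q by ring,
    qpoch_mul_eq_div h2, show M * q ^ 2 = M * q * q by ring, qpoch_mul_eq_div h1,
    qpoch_mul_eq_div h0]
  field_simp
  ring

end GosperTerm

lemma gosper_wz_rational_identity {q x M K : ℂ} (hx : x ≠ 0) (hK : K ≠ 0)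
    (hK1 : 1 - q * K ^ 2 ≠ 0) (hK2 : 1 - q ^ 2 * K ^ 2 ≠ 0)
    (hM1 : 1 - M * q ≠ 0) (hM2 : 1 - M * q ^ 2 ≠ 0)
    (hKM0 : 1 - M * K ≠ 0) (hKM1 : 1 - M * q * K ≠ 0) (hKM2 : 1 - M * q ^ 2 * K ≠ 0) :
    1 = gosperRatio q x M * ((1 - M * K ^ 3) * (1 - M * q) * (1 - M * q ^ 2) /
        ((1 - M * K) * (1 - M * q * K) * (1 - M * q ^ 2 * K))) +
      (gosperCert q M (q * K) * ((1 - M * K ^ 3) * ((1 - x * K) * (1 - q / x * K)) /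
        ((1 - q * K ^ 2) * (1 - q ^ 2 * K ^ 2) * (1 - M * K)) * q) - gosperCert q M K) := by
  have hM1' : q * M - 1 ≠ 0 := fun h => hM1 (by linear_combination -h)
  have hM2' : q ^ 2 * M - 1 ≠ 0 := fun h => hM2 (by linear_combination -h)
  have hKM1' : 1 - q * M * K ≠ 0 := fun h => hKM1 (by linear_combination h)
  have hKM2' : 1 - q ^ 2 * M * K ≠ 0 := fun h => hKM2 (by linear_combination h)
  unfold gosperRatio gosperCert
  field_simp
  ring

lemma gosperCert_one (q M : ℂ) : gosperCert q M 1 = 0 := by simp [gosperCert]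

lemma gosperCert_eq_neg_one {q M K : ℂ} (hK : K ≠ 0) (hKM0 : 1 - M * K ≠ 0)
    (hKM1 : 1 - M * q * K ≠ 0) (hMK : M * K ^ 3 = 1) : gosperCert q M K = -1 := by
  rw [gosperCert, div_eq_iff (mul_ne_zero (mul_ne_zero hK hKM0) hKM1)]
  linear_combination (q * M - K) * hMK

lemma gosperRatio_inv {q x W : ℂ} (hq0 : q ≠ 0) (hx : x ≠ 0) (hW : W ≠ 0) :
    gosperRatio q x (q ^ 3 * W)⁻¹ =
      (1 - q * x * W) * (1 - q ^ 2 / x * W) / ((1 - q * W) * (1 - q ^ 2 * W)) := by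
  have ht : (q ^ 3 * W ^ 2)⁻¹ ≠ 0 := by positivity
  have hnum : (q ^ 2 * (q ^ 3 * W)⁻¹ - x) * (q * (q ^ 3 * W)⁻¹ * x - 1) =
      (q ^ 3 * W ^ 2)⁻¹ * ((1 - q * x * W) * (1 - q ^ 2 / x * W) * x) := by
    field_simp
  have hden : (q ^ 2 * (q ^ 3 * W)⁻¹ - 1) * (q * (q ^ 3 * W)⁻¹ - 1) * x =
      (q ^ 3 * W ^ 2)⁻¹ * ((1 - q * W) * (1 - q ^ 2 * W) * x) := by
    field_simp
  rw [gosperRatio, hnum, hden, mul_div_mul_left _ _ ht, mul_div_mul_right _ _ hx]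

lemma gosperTerm_eq_telescope {q x M : ℂ} {k : ℕ} (hq : ¬IsOfFinOrder q) (hx : x ≠ 0)
    (hq0 : q ≠ 0) (hM : ∀ j < k + 3, 1 - M * q ^ j ≠ 0) :
    gosperTerm q x M k = gosperRatio q x M * gosperTerm q x (M * q ^ 3) k +
      (gosperCert q M (q ^ (k + 1)) * gosperTerm q x M (k + 1) -
        gosperCert q M (q ^ k) * gosperTerm q x M k) := by
  have hM0 : 1 - M ≠ 0 := by simpa using hM 0 (by omega)
  have hM1 : 1 - M * q ≠ 0 := by simpa using hM 1 (by omega)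
  have hKM1 : 1 - M * q * q ^ k ≠ 0 := by
    simpa only [mul_assoc, ← pow_succ'] using hM (k + 1) (by omega)
  have hKM2 : 1 - M * q ^ 2 * q ^ k ≠ 0 := by
    simpa only [mul_assoc, ← pow_add, add_comm 2 k] using hM (k + 2) (by omega)
  have hK1 : 1 - q * (q ^ k) ^ 2 ≠ 0 := by
    simpa only [← pow_mul, ← pow_succ'] using one_sub_pow_ne_zero hq (Nat.succ_ne_zero (k * 2))
  have hK2 : 1 - q ^ 2 * (q ^ k) ^ 2 ≠ 0 := by
    simpa only [← pow_mul, ← pow_add] using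
      one_sub_pow_ne_zero hq (show 2 + k * 2 ≠ 0 by omega)
  rw [gosperTerm_mul_q_cube x k hM0 hM1 (hM 2 (by omega)), gosperTerm_succ, pow_succ' q k]
  linear_combination gosperTerm q x M k * gosper_wz_rational_identity hx (pow_ne_zero k hq0)
    hK1 hK2 hM1 (hM 2 (by omega)) (hM k (by omega)) hKM1 hKM2

section GosperSum

variable {q x : ℂ} (hq : ¬IsOfFinOrder q) (hx : x ≠ 0) (hq0 : q ≠ 0)
include hq hx hq0

lemma sum_gosperTerm_succ (n : ℕ) :
    ∑ k ∈ range (n + 2), gosperTerm q x (q ^ (3 * (n + 1)))⁻¹ k =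
      gosperRatio q x (q ^ (3 * (n + 1)))⁻¹ *
        ∑ k ∈ range (n + 1), gosperTerm q x (q ^ (3 * n))⁻¹ k := by
  set M := (q ^ (3 * (n + 1)))⁻¹ with hMdef
  have hM : ∀ j < 3 * (n + 1), 1 - M * q ^ j ≠ 0 := fun j hj =>
    one_sub_inv_pow_mul_pow_ne_zero hq hq0 hj
  have hMq : M * q ^ 3 = (q ^ (3 * n))⁻¹ := by
    rw [hMdef, show 3 * (n + 1) = 3 * n + 3 by ring, pow_add, mul_inv,
      inv_mul_cancel_right₀ (pow_ne_zero 3 hq0)]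
  set G : ℕ → ℂ := fun k => gosperCert q M (q ^ k) * gosperTerm q x M k
  have htel : ∀ k ∈ range (n + 1),
      gosperTerm q x M k = gosperRatio q x M * gosperTerm q x (M * q ^ 3) k + (G (k + 1) - G k) :=
    fun k hk => gosperTerm_eq_telescope hq hx hq0 fun j hj => hM j (by simp at hk; omega)
  have hG0 : G 0 = 0 := by simp [G, gosperCert_one]
  have hGn : G (n + 1) = -gosperTerm q x M (n + 1) := by
    have hc : gosperCert q M (q ^ (n + 1)) = -1 := by
      refine gosperCert_eq_neg_one (pow_ne_zero _ hq0) (hM (n + 1) (by omega)) ?_ ?_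
      · simpa only [mul_assoc, ← pow_succ'] using hM (n + 2) (by omega)
      · rw [← pow_mul, hMdef, inv_mul_eq_one₀ (pow_ne_zero _ hq0), mul_comm]
    simp only [G, hc, neg_one_mul]
  rw [sum_range_succ, sum_congr rfl htel, sum_add_distrib, ← mul_sum, sum_range_sub, hG0, hGn,
    hMq]
  ring

theorem sum_gosperTerm (n : ℕ) :
    ∑ k ∈ range (n + 1), gosperTerm q x (q ^ (3 * n))⁻¹ k =
      qpoch (q * x) (q ^ 3) n * qpoch (q ^ 2 / x) (q ^ 3) n /
        (qpoch q (q ^ 3) n * qpoch (q ^ 2) (q ^ 3) n) := by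
  induction n with
  | zero => simp [gosperTerm]
  | succ n ih =>
    rw [sum_gosperTerm_succ hq hx hq0, ih, show q ^ (3 * (n + 1)) = q ^ 3 * (q ^ 3) ^ n by ring,
      gosperRatio_inv hq0 hx (by positivity)]
    simp only [qpoch_succ, div_eq_mul_inv, mul_inv]
    ring

end GosperSum

theorem q_gosper_first_general (n : ℕ) (q x s : ℂ) (hs : s ^ 2 = q)
    (hq0 : 0 < ‖q‖) (hq1 : ‖q‖ < 1) (hx : x ≠ 0) :
    ∑ k ∈ Finset.range (n+1),
      qpoch (q ^ (-(3*n : ℤ))) (q^3) k * (qpoch x q k * qpoch (q/x) q k) /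
        (qpoch q q k * qpoch (-q) q k * qpoch s q k * qpoch (-s) q k *
          qpoch (q ^ (-(3*n : ℤ))) q k) * q^k
      = (qpoch (q*x) (q^3) n * qpoch (q^2/x) (q^3) n) /
          (qpoch q (q^3) n * qpoch (q^2) (q^3) n) := by
  have hq : ¬IsOfFinOrder q := fun h => hq1.ne h.norm_eq_one
  have hden : ∀ k, qpoch q q k * qpoch (-q) q k * qpoch s q k * qpoch (-s) q k =
      qpoch q q (2 * k) := fun k => by
    rw [mul_assoc, qpoch_mul_qpoch_neg, qpoch_mul_qpoch_neg, hs, qpoch_two_mul, mul_comm, sq]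
  have hM : q ^ (-(3 * n : ℤ)) = (q ^ (3 * n))⁻¹ := by
    rw [zpow_neg]
    norm_cast
  simp only [hden, hM]
  exact sum_gosperTerm hq hx (norm_pos_iff.mp hq0) n

theorem q_gosper_first (n : ℕ) (q x s : ℂ) (hs : s ^ 2 = q)
    (hq0 : 0 < ‖q‖) (hq1 : ‖q‖ < 1) (hx : x ≠ 0)
    (hden : ∀ k ≤ n,
      qpoch q q k * qpoch (-q) q k * qpoch s q k * qpoch (-s) q k *
        qpoch (q ^ (-(3*n : ℤ))) q k ≠ 0)
    (hden2 : qpoch q (q^3) n * qpoch (q^2) (q^3) n ≠ 0) :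
    ∑ k ∈ Finset.range (n+1),
      qpoch (q ^ (-(3*n : ℤ))) (q^3) k * (qpoch x q k * qpoch (q/x) q k) /
        (qpoch q q k * qpoch (-q) q k * qpoch s q k * qpoch (-s) q k *
          qpoch (q ^ (-(3*n : ℤ))) q k) * q^k
      = (qpoch (q*x) (q^3) n * qpoch (q^2/x) (q^3) n) /
          (qpoch q (q^3) n * qpoch (q^2) (q^3) n) :=
  q_gosper_first_general n q x s hs hq0 hq1 hx
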